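/- Let Λ be a staircase shape: the set of cells {(i,j) ∈ ℤ² : 1 ≤ j ≤ i ≤ n}. Interpret cell (i,j) as the route of the caracol graph Path(n) entering at inner vertex j and exiting at inner vertex i; two cells (i,j) and (i',j') with j ≤ i and j' ≤ i' correspond to conflicting routes if and only if one is strictly northwest of the other within the shape, i.e., (after suitable ordering) j < j' ≤ i < i'. Prove: two distinct non-exceptional routes (i,j) and (i',j') of the caracol graph Path(n) with the standard ample framing are in conflict if and only if j < j' ≤ i < i' or j' < j ≤ i' < i. -/

import Mathlib

/-- Edges of the caracol graph `Path(n)` on vertices `0, 1, …, n, n+1` (with source `0`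
and sink `n+1`): horizontal edges `i → i+1`, source arcs `0 → i`, and sink arcs
`i → n+1`. -/
inductive CaracolEdge where
  | horiz : ℕ → CaracolEdge
  | arcS : ℕ → CaracolEdge
  | arcT : ℕ → CaracolEdge
deriving DecidableEq

open CaracolEdge

def caracolSrc : CaracolEdge → ℕ
  | horiz i => i
  | arcS _ => 0
  | arcT i => i

def caracolTgt (n : ℕ) : CaracolEdge → ℕ
  | horiz i => i + 1
  | arcS i => i
  | arcT _ => n + 1

/-- The standard ample (lab) framing of the caracol: horizontal edges are labeled `2`,
arcs are labeled `1`. -/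
def caracolLabel : CaracolEdge → ℕ
  | horiz _ => 2
  | arcS _ => 1
  | arcT _ => 1

/-- The route of the caracol entering the inner path at inner vertex `j` and exiting at
inner vertex `i` (with `j ≤ i`): source arc to `j`, horizontal edges `j, …, i-1`, and
the sink arc from `i`. -/
def caracolRoute (j i : ℕ) : List CaracolEdge :=
  arcS j :: ((List.range' j (i - j)).map horiz ++ [arcT i])

/-- Two routes `R` and `S` of a framed DAG (given by `src`, `tgt`, and edge labels `ℓ`)
are in conflict if they share a common subroute `M` from a vertex `u` to a vertex `v`
(possibly `u = v` and `M` empty), have distinct edges `pR, pS` entering `u` and distinct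
edges `nR, nS` leaving `v`, and the framing orders of the entering and leaving edges
disagree. -/
def RoutesConflict {V E : Type*} (src tgt : E → V) (ℓ : E → ℕ) (R S : List E) : Prop :=
  ∃ (pR pS nR nS : E) (A B C D M : List E),
    R = A ++ pR :: (M ++ nR :: B) ∧
    S = C ++ pS :: (M ++ nS :: D) ∧
    tgt pR = tgt pS ∧ src nR = src nS ∧
    ((ℓ pR < ℓ pS ∧ ℓ nS < ℓ nR) ∨ (ℓ pS < ℓ pR ∧ ℓ nR < ℓ nS))

/-! In the lab framing arcs carry label `1` and inner edges label `2`, so of two conflicting routes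
one enters the common subpath by an arc and the other by an inner edge, and they leave it the
other way round. An arc entering an inner vertex is a source arc `0 → j`, and an arc leaving one
is a sink arc `i' → n + 1`; the other route then runs through `j - 1 → j` and `i' → i' + 1`,
which says `j' < j ≤ i' < i`. Conversely, crossing intervals conflict along the common subpath
`[j', i]`. -/

theorem RoutesConflict.symm {V E : Type*} {src tgt : E → V} {ℓ : E → ℕ} {R S : List E}
    (h : RoutesConflict src tgt ℓ R S) : RoutesConflict src tgt ℓ S R := by
  obtain ⟨pR, pS, nR, nS, A, B, C, D, M, hR, hS, htgt, hsrc, hℓ⟩ := h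
  exact ⟨pS, pR, nS, nR, C, D, A, B, M, hS, hR, htgt.symm, hsrc.symm, hℓ.symm⟩

theorem RoutesConflict.exists_mem {V E : Type*} {src tgt : E → V} {ℓ : E → ℕ} {R S : List E}
    (h : RoutesConflict src tgt ℓ R S) :
    ∃ pR ∈ R, ∃ pS ∈ S, ∃ nR ∈ R, ∃ nS ∈ S, tgt pR = tgt pS ∧ src nR = src nS ∧
      ((ℓ pR < ℓ pS ∧ ℓ nS < ℓ nR) ∨ (ℓ pS < ℓ pR ∧ ℓ nR < ℓ nS)) := by
  obtain ⟨pR, pS, nR, nS, A, B, C, D, M, rfl, rfl, htgt, hsrc, hℓ⟩ := h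
  exact ⟨pR, by simp, pS, by simp, nR, by simp, nS, by simp, htgt, hsrc, hℓ⟩

@[simp]
theorem arcS_mem_caracolRoute {k j i : ℕ} : arcS k ∈ caracolRoute j i ↔ k = j := by
  simp [caracolRoute]

@[simp]
theorem arcT_mem_caracolRoute {k j i : ℕ} : arcT k ∈ caracolRoute j i ↔ k = i := by
  simp [caracolRoute]

@[simp]
theorem horiz_mem_caracolRoute {k j i : ℕ} :
    horiz k ∈ caracolRoute j i ↔ j ≤ k ∧ k < i := by
  simp [caracolRoute]
  omega

theorem exists_eq_horiz_of_caracolLabel_lt {e f : CaracolEdge}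
    (h : caracolLabel e < caracolLabel f) : ∃ k, f = horiz k := by
  cases e <;> cases f <;> simp_all [caracolLabel]

theorem caracolRoute_eq_append {j u i : ℕ} (hju : j ≤ u) (hui : u ≤ i) :
    caracolRoute j i =
      arcS j :: ((List.range' j (u - j)).map horiz ++
        ((List.range' u (i - u)).map horiz ++ [arcT i])) := by
  have hsplit := List.range'_append_1 (s := j) (m := u - j) (n := i - u)
  rw [Nat.add_sub_cancel' hju, show u - j + (i - u) = i - j by omega] at hsplit
  rw [caracolRoute, ← List.append_assoc, ← List.map_append, hsplit]

theorem range'_sub_eq_cons {s t : ℕ} (h : s < t) :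
    List.range' s (t - s) = s :: List.range' (s + 1) (t - (s + 1)) := by
  rw [show t - s = t - (s + 1) + 1 by omega, List.range'_succ]

theorem strictly_cross_of_caracolLabel_lt {n j i j' i' : ℕ} (hi' : i' ≤ n)
    {pR pS nR nS : CaracolEdge} (hpR : pR ∈ caracolRoute j i) (hpS : pS ∈ caracolRoute j' i')
    (hnR : nR ∈ caracolRoute j i) (hnS : nS ∈ caracolRoute j' i')
    (htgt : caracolTgt n pR = caracolTgt n pS) (hsrc : caracolSrc nR = caracolSrc nS)
    (hp : caracolLabel pR < caracolLabel pS) (hn : caracolLabel nS < caracolLabel nR) :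
    j' < j ∧ j ≤ i' ∧ i' < i := by
  obtain ⟨k, rfl⟩ := exists_eq_horiz_of_caracolLabel_lt hp
  obtain ⟨m, rfl⟩ := exists_eq_horiz_of_caracolLabel_lt hn
  rw [horiz_mem_caracolRoute] at hpS hnR
  cases pR with
  | horiz => simp [caracolLabel] at hp
  | arcT =>
    -- the sink `n + 1` is not the target of an inner edge `k → k + 1` with `k < i' ≤ n`
    simp only [caracolTgt] at htgt
    omega
  | arcS =>
    rw [arcS_mem_caracolRoute] at hpR
    subst hpR
    simp only [caracolTgt] at htgt
    cases nS with
    | horiz => simp [caracolLabel] at hn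
    | arcS =>
      -- a source arc leaves `0`, but the inner edge leaves `m ≥ j = k + 1`
      simp only [caracolSrc] at hsrc
      omega
    | arcT =>
      rw [arcT_mem_caracolRoute] at hnS
      simp only [caracolSrc] at hsrc
      omega

theorem routesConflict_of_strictly_cross {n j i j' i' : ℕ} (hjj' : j < j') (hj'i : j' ≤ i)
    (hii' : i < i') :
    RoutesConflict caracolSrc (caracolTgt n) caracolLabel
      (caracolRoute j i) (caracolRoute j' i') := by
  obtain ⟨a, rfl⟩ : ∃ a, j' = a + 1 := ⟨j' - 1, by omega⟩
  refine ⟨horiz a, arcS (a + 1), arcT i, horiz i,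
    arcS j :: (List.range' j (a - j)).map horiz, [], [],
    (List.range' (i + 1) (i' - (i + 1))).map horiz ++ [arcT i'],
    (List.range' (a + 1) (i - (a + 1))).map horiz, ?_, ?_, rfl, rfl,
    Or.inr ⟨Nat.one_lt_two, Nat.one_lt_two⟩⟩
  · rw [caracolRoute_eq_append (u := a) (by omega) (by omega),
      range'_sub_eq_cons (s := a) (by omega)]
    simp
  · rw [caracolRoute_eq_append (u := i) hj'i hii'.le, range'_sub_eq_cons hii']
    simp

theorem caracol_conflict_iff_strictly_cross_general (n j i j' i' : ℕ)
    (h3 : i ≤ n) (h3' : i' ≤ n) :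
    RoutesConflict caracolSrc (caracolTgt n) caracolLabel
        (caracolRoute j i) (caracolRoute j' i') ↔
      ((j < j' ∧ j' ≤ i ∧ i < i') ∨ (j' < j ∧ j ≤ i' ∧ i' < i)) := by
  constructor
  · intro h
    obtain ⟨pR, hpR, pS, hpS, nR, hnR, nS, hnS, htgt, hsrc, ⟨hp, hn⟩ | ⟨hp, hn⟩⟩ :=
      h.exists_mem
    · exact Or.inr (strictly_cross_of_caracolLabel_lt h3' hpR hpS hnR hnS htgt hsrc hp hn)
    · exact Or.inl (strictly_cross_of_caracolLabel_lt h3 hpS hpR hnS hnR htgt.symm hsrc.symm hp hn)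
  · rintro (⟨hjj', hj'i, hii'⟩ | ⟨hj'j, hji', hi'i⟩)
    · exact routesConflict_of_strictly_cross hjj' hj'i hii'
    · exact (routesConflict_of_strictly_cross hj'j hji' hi'i).symm

/-- Two distinct non-exceptional routes `(j,i)` and `(j',i')` of the
caracol graph `Path(n)` with the standard ample framing are in conflict if and only if
`j < j' ≤ i < i'` or `j' < j ≤ i' < i`. -/
theorem caracol_conflict_iff_strictly_cross (n j i j' i' : ℕ)
    (h1 : 1 ≤ j) (h2 : j ≤ i) (h3 : i ≤ n)
    (h1' : 1 ≤ j') (h2' : j' ≤ i') (h3' : i' ≤ n)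
    (hne : (j, i) ≠ (j', i'))
    (hexc : ¬ ∀ e ∈ caracolRoute j i, ∀ f ∈ caracolRoute j i,
      caracolLabel e = caracolLabel f)
    (hexc' : ¬ ∀ e ∈ caracolRoute j' i', ∀ f ∈ caracolRoute j' i',
      caracolLabel e = caracolLabel f) :
    RoutesConflict caracolSrc (caracolTgt n) caracolLabel
        (caracolRoute j i) (caracolRoute j' i') ↔
      ((j < j' ∧ j' ≤ i ∧ i < i') ∨ (j' < j ∧ j ≤ i' ∧ i' < i)) :=
  caracol_conflict_iff_strictly_cross_general n j i j' i' h3 h3'
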